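/- Let E be a separable Banach space, let (S_t)_{t≥0} be a C₀-semigroup on E, let (Ω, 𝓕, (𝓕_t)_{t≥0}, ℙ) be a filtered probability space, and let X : ℝ₊ × Ω → E be a progressively measurable process such that ℙ(∫₀ᵗ ‖X_s‖ ds < ∞) = 1 for all t ≥ 0. Then the process Y defined pathwise by the Bochner integral Y_t = ∫₀ᵗ S_{t−s} X_s ds is adapted to (𝓕_t)_{t≥0} and has ℙ-almost surely continuous sample paths t ↦ Y_t. -/

import Mathlib

/-!
The semigroup is bounded in operator norm on compact time intervals: the strong continuity at
`0` bounds each orbit on some `[0, δ]`, the semigroup law propagates this to `[0, n δ]`, and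
Banach–Steinhaus makes the bound uniform. Hence `(t, x) ↦ S (max t 0) x`, the semigroup
extended by the identity to negative times, is jointly continuous on `ℝ × E`.
Adaptedness follows from measurability of parametric integrals of jointly measurable integrands
on `[0, t] × Ω`. Continuity of paths is dominated convergence with dominating function
`M ‖X s‖`, since `t ↦ 1_{s ≤ t} S (t - s) (X s)` is continuous except at `t = s`.
-/

open Filter Topology MeasureTheory Set
open scoped NNReal

theorem tendsto_apply_zero_of_eventually_norm_le {𝕜 E F α : Type*} [NontriviallyNormedField 𝕜]
    [NormedAddCommGroup E] [NormedSpace 𝕜 E] [NormedAddCommGroup F] [NormedSpace 𝕜 F]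
    {l : Filter α} {A : α → E →L[𝕜] F} {y : α → E} {M : ℝ}
    (hA : ∀ᶠ a in l, ‖A a‖ ≤ M) (hy : Tendsto y l (𝓝 0)) :
    Tendsto (fun a => A a (y a)) l (𝓝 0) :=
  squeeze_zero_norm' (hA.mono fun a ha => (A a).le_of_opNorm_le ha (y a))
    (by simpa using hy.norm.const_mul M)

section Progressive

variable {Ω E : Type*} {m0 : MeasurableSpace Ω} {F : Filtration ℝ≥0 m0} {X : ℝ≥0 → Ω → E}

theorem MeasureTheory.IsStronglyProgressive.stronglyMeasurable_min_toNNReal [TopologicalSpace E]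
    (hX : IsStronglyProgressive F X) (t : ℝ≥0) :
    StronglyMeasurable[MeasurableSpace.prod inferInstance (F t)]
      fun p : ℝ × Ω => X (min p.1.toNNReal t) p.2 := by
  have hm : Measurable[MeasurableSpace.prod inferInstance (F t),
      MeasurableSpace.prod inferInstance (F t)]
      fun p : ℝ × Ω => ((⟨min p.1.toNNReal t, mem_Iic.2 (min_le_right _ _)⟩ : Iic t), p.2) :=
    (((measurable_real_toNNReal.comp (@measurable_fst ℝ Ω _ (F t))).min
      measurable_const).subtype_mk).prodMk (@measurable_snd ℝ Ω _ (F t))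
  exact (hX t).comp_measurable hm

theorem MeasureTheory.IsStronglyProgressive.integrableOn_Icc [NormedAddCommGroup E]
    (hX : IsStronglyProgressive F X) (ω : Ω) (t : ℝ≥0)
    (h : ∫⁻ s in Icc (0 : ℝ) t, (‖X s.toNNReal ω‖₊ : ENNReal) < ⊤) :
    IntegrableOn (fun s : ℝ => X s.toNNReal ω) (Icc 0 t) := by
  refine ⟨?_, h⟩
  have hpath : StronglyMeasurable fun s : ℝ => X (min s.toNNReal t) ω :=
    (hX.stronglyMeasurable_min_toNNReal t).comp_measurable (@measurable_prodMk_right ℝ Ω _ (F t) ω)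
  refine hpath.aestronglyMeasurable.congr ((ae_restrict_mem measurableSet_Icc).mono fun s hs => ?_)
  simp only [min_eq_left (Real.toNNReal_le_iff_le_coe.2 hs.2)]

end Progressive

structure IsC0Semigroup {E : Type*} [NormedAddCommGroup E] [NormedSpace ℝ E]
    (S : ℝ → E →L[ℝ] E) : Prop where
  map_zero : S 0 = ContinuousLinearMap.id ℝ E
  map_add : ∀ s t : ℝ, 0 ≤ s → 0 ≤ t → S (s + t) = (S s).comp (S t)
  tendsto_nhdsGT_zero : ∀ x : E, Tendsto (fun t : ℝ => S t x) (𝓝[>] 0) (𝓝 x)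

namespace IsC0Semigroup

variable {E : Type*} [NormedAddCommGroup E] [NormedSpace ℝ E] {S : ℝ → E →L[ℝ] E}

theorem apply_add (hS : IsC0Semigroup S) {s t : ℝ} (hs : 0 ≤ s) (ht : 0 ≤ t) (x : E) :
    S (s + t) x = S s (S t x) := by
  rw [hS.map_add s t hs ht, ContinuousLinearMap.comp_apply]

theorem tendsto_nhdsGE_zero (hS : IsC0Semigroup S) (x : E) :
    Tendsto (fun t : ℝ => S t x) (𝓝[≥] 0) (𝓝 x) := by
  have h : ContinuousWithinAt (fun t => S t x) (Ioi 0) 0 := by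
    simpa [ContinuousWithinAt, hS.map_zero] using hS.tendsto_nhdsGT_zero x
  simpa [ContinuousWithinAt, hS.map_zero] using continuousWithinAt_Ioi_iff_Ici.1 h

theorem exists_norm_apply_le (hS : IsC0Semigroup S) (x : E) (T : ℝ) :
    ∃ C, ∀ t ∈ Icc 0 T, ‖S t x‖ ≤ C := by
  obtain ⟨δ, hδ, hsmall⟩ : ∃ δ > 0, ∀ t ∈ Icc 0 δ, ‖S t x‖ ≤ ‖x‖ + 1 :=
    mem_nhdsGE_iff_exists_Icc_subset.1
      ((hS.tendsto_nhdsGE_zero x).norm.eventually (eventually_le_nhds (lt_add_one ‖x‖)))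
  have hmul : ∀ n : ℕ, ∃ C, ∀ t ∈ Icc 0 (n * δ), ‖S t x‖ ≤ C := by
    intro n
    induction n with
    | zero => exact ⟨‖x‖ + 1, fun t ht => hsmall t ⟨ht.1, ht.2.trans (by simp [hδ.le])⟩⟩
    | succ n ih =>
      obtain ⟨C, hC⟩ := ih
      refine ⟨max (‖x‖ + 1) (‖S δ‖ * C), fun t ht => ?_⟩
      rcases le_or_gt t δ with htδ | htδ
      · exact (hsmall t ⟨ht.1, htδ⟩).trans (le_max_left _ _)
      · have hmem : t - δ ∈ Icc 0 (n * δ) := ⟨by linarith, by push_cast at ht; linarith [ht.2]⟩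
        calc ‖S t x‖ = ‖S δ (S (t - δ) x)‖ := by rw [← hS.apply_add hδ.le hmem.1, add_sub_cancel]
          _ ≤ ‖S δ‖ * C := (S δ).le_opNorm_of_le (hC _ hmem)
          _ ≤ _ := le_max_right _ _
  obtain ⟨n, hn⟩ := exists_nat_ge (T / δ)
  obtain ⟨C, hC⟩ := hmul n
  exact ⟨C, fun t ht => hC t ⟨ht.1, ht.2.trans ((div_le_iff₀ hδ).1 hn)⟩⟩

theorem exists_norm_max_le [CompleteSpace E] (hS : IsC0Semigroup S) (T : ℝ) :
    ∃ M, ∀ t ≤ T, ‖S (max t 0)‖ ≤ M := by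
  have hmem : ∀ t ≤ T, max t 0 ∈ Icc 0 (max T 0) := fun t ht =>
    ⟨le_max_right _ _, max_le_max_right 0 ht⟩
  obtain ⟨M, hM⟩ := banach_steinhaus (g := fun t : Iic T => S (max t 0)) fun x =>
    (hS.exists_norm_apply_le x (max T 0)).imp fun C hC t => hC _ (hmem t t.2)
  exact ⟨M, fun t ht => hM ⟨t, ht⟩⟩

theorem continuous_apply [CompleteSpace E] (hS : IsC0Semigroup S) (x : E) :
    Continuous fun t : ℝ => S (max t 0) x := by
  have hclamp : Continuous fun t : ℝ => max t 0 := continuous_id.max continuous_const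
  refine continuous_iff_continuousAt.2 fun t₀ => continuousAt_iff_continuous_left_right.2 ⟨?_, ?_⟩
  · -- `S (max t₀ 0) x = S (max t 0) (S (max t₀ 0 - max t 0) x)` with `‖S (max t 0)‖` bounded.
    have hshift : Tendsto (fun t => max t₀ 0 - max t 0) (𝓝[≤] t₀) (𝓝[≥] 0) := by
      refine tendsto_nhdsWithin_iff.2 ⟨?_, eventually_nhdsWithin_of_forall fun t ht =>
        mem_Ici.2 (sub_nonneg.2 (max_le_max_right (0 : ℝ) ht))⟩
      exact ((continuous_const.sub hclamp).tendsto' t₀ 0 (sub_self _)).mono_left nhdsWithin_le_nhds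
    obtain ⟨M, hM⟩ := hS.exists_norm_max_le t₀
    have hy : Tendsto (fun t => x - S (max t₀ 0 - max t 0) x) (𝓝[≤] t₀) (𝓝 0) := by
      simpa using (tendsto_const_nhds (x := x)).sub ((hS.tendsto_nhdsGE_zero x).comp hshift)
    have hsmall := tendsto_apply_zero_of_eventually_norm_le (eventually_nhdsWithin_of_forall hM) hy
    rw [ContinuousWithinAt, ← tendsto_sub_nhds_zero_iff]
    refine hsmall.congr' (eventually_nhdsWithin_of_forall fun t ht => ?_)
    dsimp only
    rw [map_sub, ← hS.apply_add (le_max_right _ _) (sub_nonneg.2 (max_le_max_right 0 ht)),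
      add_sub_cancel]
  · have hshift : Tendsto (fun t => max t 0 - max t₀ 0) (𝓝[≥] t₀) (𝓝[≥] 0) := by
      refine tendsto_nhdsWithin_iff.2 ⟨?_, eventually_nhdsWithin_of_forall fun t ht =>
        mem_Ici.2 (sub_nonneg.2 (max_le_max_right (0 : ℝ) ht))⟩
      exact ((hclamp.sub continuous_const).tendsto' t₀ 0 (sub_self _)).mono_left nhdsWithin_le_nhds
    refine (((S _).continuous.tendsto x).comp ((hS.tendsto_nhdsGE_zero x).comp hshift)).congr'
      (eventually_nhdsWithin_of_forall fun t ht => ?_)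
    dsimp only [Function.comp_apply]
    rw [← hS.apply_add (le_max_right _ _) (sub_nonneg.2 (max_le_max_right 0 ht)), add_sub_cancel]

theorem continuous_uncurry [CompleteSpace E] (hS : IsC0Semigroup S) :
    Continuous fun p : ℝ × E => S (max p.1 0) p.2 := by
  refine continuous_iff_continuousAt.2 fun ⟨t₀, x₀⟩ => ?_
  obtain ⟨M, hM⟩ := hS.exists_norm_max_le (t₀ + 1)
  have hbound : ∀ᶠ p : ℝ × E in 𝓝 (t₀, x₀), ‖S (max p.1 0)‖ ≤ M :=
    (continuous_fst.tendsto _).eventually (eventually_le_nhds (lt_add_one t₀)) |>.mono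
      fun p hp => hM _ hp
  have hsmall := tendsto_apply_zero_of_eventually_norm_le hbound
    (tendsto_sub_nhds_zero_iff.2 (continuous_snd.tendsto (t₀, x₀)))
  have hpath := ((hS.continuous_apply x₀).comp continuous_fst).tendsto (t₀, x₀)
  simpa [ContinuousAt] using hsmall.add hpath


theorem stronglyAdapted_convolution [CompleteSpace E] {Ω : Type*} {m0 : MeasurableSpace Ω}
    {F : Filtration ℝ≥0 m0} {X : ℝ≥0 → Ω → E} (hS : IsC0Semigroup S)
    (hX : IsStronglyProgressive F X) :
    StronglyAdapted F fun (t : ℝ≥0) (ω : Ω) =>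
      ∫ s in (0 : ℝ)..t, S (t - s) (X s.toNNReal ω) := by
  intro t
  have hint : StronglyMeasurable[MeasurableSpace.prod inferInstance (F t)]
      fun p : ℝ × Ω => S (max (t - p.1) 0) (X (min p.1.toNNReal t) p.2) :=
    hS.continuous_uncurry.comp_stronglyMeasurable
      (((continuous_const.sub continuous_id).stronglyMeasurable.comp_measurable
        (@measurable_fst ℝ Ω _ (F t))).prodMk (hX.stronglyMeasurable_min_toNNReal t))
  convert @StronglyMeasurable.integral_prod_left' ℝ Ω E _ (F t) (volume.restrict (Ioc 0 t))
    _ _ _ _ hint using 1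
  funext ω
  dsimp only
  rw [intervalIntegral.integral_of_le t.coe_nonneg]
  refine setIntegral_congr_fun measurableSet_Ioc fun s hs => ?_
  simp only [max_eq_left (sub_nonneg.2 hs.2), min_eq_left (Real.toNNReal_le_iff_le_coe.2 hs.2)]

theorem continuousAt_integral_indicator_Iic [CompleteSpace E] (hS : IsC0Semigroup S)
    {u : ℝ → E} {T t₀ : ℝ} (hu : IntegrableOn u (Ioc 0 T)) (ht₀ : t₀ < T) :
    ContinuousAt (fun t => ∫ s in Ioc 0 T,
      (Iic t).indicator (fun s => S (max (t - s) 0) (u s)) s) t₀ := by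
  obtain ⟨M, hM⟩ := hS.exists_norm_max_le T
  refine continuousAt_of_dominated (bound := fun s => M * ‖u s‖) ?_ ?_ (hu.norm.const_mul M) ?_
  · exact Eventually.of_forall fun t => (hS.continuous_uncurry.comp_aestronglyMeasurable
      ((continuous_const.sub continuous_id).aestronglyMeasurable.prodMk
        hu.aestronglyMeasurable)).indicator measurableSet_Iic
  · filter_upwards [eventually_lt_nhds ht₀] with t ht
    filter_upwards [ae_restrict_mem measurableSet_Ioc] with s hs
    exact (norm_indicator_le_norm_self _ _).trans
      ((S _).le_of_opNorm_le (hM _ (by linarith [hs.1])) _)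
  · filter_upwards [ae_restrict_of_ae (Measure.ae_ne volume t₀)] with s hs
    rcases hs.lt_or_gt with hlt | hgt
    · refine ((hS.continuous_apply (u s)).comp (continuous_sub_right s)).continuousAt.congr ?_
      filter_upwards [eventually_gt_nhds hlt] with t ht
      simp [indicator_of_mem (mem_Iic.2 ht.le)]
    · refine (continuousAt_const (y := (0 : E))).congr ?_
      filter_upwards [eventually_lt_nhds hgt] with t ht
      simp [indicator_of_notMem (notMem_Iic.2 ht)]

theorem continuous_convolution [CompleteSpace E] (hS : IsC0Semigroup S) {u : ℝ → E}
    (hu : ∀ T, IntegrableOn u (Ioc 0 T)) :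
    Continuous fun t : ℝ≥0 => ∫ s in (0 : ℝ)..t, S (t - s) (u s) := by
  refine continuous_iff_continuousAt.2 fun t₀ => ?_
  have hT : (t₀ : ℝ) < t₀ + 1 := lt_add_one _
  refine ((hS.continuousAt_integral_indicator_Iic (hu _) hT).comp
    NNReal.continuous_coe.continuousAt).congr ?_
  filter_upwards [NNReal.continuous_coe.continuousAt.eventually (eventually_lt_nhds hT)] with t ht
  rw [Function.comp_apply, setIntegral_indicator measurableSet_Iic, Ioc_inter_Iic,
    min_eq_right ht.le, intervalIntegral.integral_of_le t.coe_nonneg]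
  exact setIntegral_congr_fun measurableSet_Ioc fun s hs => by
    simp only [max_eq_left (sub_nonneg.2 hs.2)]

end IsC0Semigroup

theorem convolution_process_adapted_continuous_general
    {E : Type*} [NormedAddCommGroup E] [NormedSpace ℝ E] [CompleteSpace E]
    (S : ℝ → E →L[ℝ] E)
    (hS0 : S 0 = ContinuousLinearMap.id ℝ E)
    (hSadd : ∀ s t : ℝ, 0 ≤ s → 0 ≤ t → S (s + t) = (S s).comp (S t))
    (hScont : ∀ x : E, Tendsto (fun t : ℝ => S t x) (𝓝[>] (0 : ℝ)) (𝓝 x))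
    {Ω : Type*} {m0 : MeasurableSpace Ω} (μ : Measure Ω)
    (F : Filtration ℝ≥0 m0)
    (X : ℝ≥0 → Ω → E)
    (hprog : IsStronglyProgressive F X)
    (hint : ∀ t : ℝ≥0, ∀ᵐ ω ∂μ,
      (∫⁻ s in Set.Icc (0 : ℝ) (t : ℝ), (‖X (Real.toNNReal s) ω‖₊ : ENNReal)) < ⊤) :
    StronglyAdapted F
      (fun (t : ℝ≥0) (ω : Ω) =>
        ∫ s in (0:ℝ)..(t : ℝ), S ((t : ℝ) - s) (X (Real.toNNReal s) ω)) ∧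
    ∀ᵐ ω ∂μ, Continuous
      (fun t : ℝ≥0 =>
        ∫ s in (0:ℝ)..(t : ℝ), S ((t : ℝ) - s) (X (Real.toNNReal s) ω)) := by
  have hS : IsC0Semigroup S := ⟨hS0, hSadd, hScont⟩
  refine ⟨hS.stronglyAdapted_convolution hprog, ?_⟩
  filter_upwards [ae_all_iff.2 fun n : ℕ => hint n] with ω hω
  refine hS.continuous_convolution fun T => ?_
  obtain ⟨n, hn⟩ := exists_nat_ge T
  exact (hprog.integrableOn_Icc ω n (hω n)).mono_set
    (Ioc_subset_Icc_self.trans (Icc_subset_Icc_right (by simpa using hn)))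

/-- **Regularity of the drift convolution.**
Let `E` be a separable Banach space, let `(S t)_{t ≥ 0}` be a C₀-semigroup on `E`, let
`(Ω, 𝓕, (𝓕ₜ), ℙ)` be a filtered probability space and let `X : ℝ₊ × Ω → E` be a progressively
measurable process with `ℙ(∫₀ᵗ ‖X s‖ ds < ∞) = 1` for all `t ≥ 0`. Then the process
`Y t = ∫₀ᵗ S (t - s) (X s) ds` (defined pathwise as a Bochner integral) is adapted and has
`ℙ`-almost surely continuous sample paths. -/
theorem convolution_process_adapted_continuous
    {E : Type*} [NormedAddCommGroup E] [NormedSpace ℝ E] [CompleteSpace E]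
    [TopologicalSpace.SeparableSpace E]
    (S : ℝ → E →L[ℝ] E)
    (hS0 : S 0 = ContinuousLinearMap.id ℝ E)
    (hSadd : ∀ s t : ℝ, 0 ≤ s → 0 ≤ t → S (s + t) = (S s).comp (S t))
    (hScont : ∀ x : E, Tendsto (fun t : ℝ => S t x) (𝓝[>] (0 : ℝ)) (𝓝 x))
    {Ω : Type*} {m0 : MeasurableSpace Ω} (μ : Measure Ω) [IsProbabilityMeasure μ]
    (F : Filtration ℝ≥0 m0)
    (X : ℝ≥0 → Ω → E)
    (hprog : IsStronglyProgressive F X)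
    (hint : ∀ t : ℝ≥0, ∀ᵐ ω ∂μ,
      (∫⁻ s in Set.Icc (0 : ℝ) (t : ℝ), (‖X (Real.toNNReal s) ω‖₊ : ENNReal)) < ⊤) :
    StronglyAdapted F
      (fun (t : ℝ≥0) (ω : Ω) =>
        ∫ s in (0:ℝ)..(t : ℝ), S ((t : ℝ) - s) (X (Real.toNNReal s) ω)) ∧
    ∀ᵐ ω ∂μ, Continuous
      (fun t : ℝ≥0 =>
        ∫ s in (0:ℝ)..(t : ℝ), S ((t : ℝ) - s) (X (Real.toNNReal s) ω)) :=
  convolution_process_adapted_continuous_general S hS0 hSadd hScont μ F X hprog hint
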